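/- arXiv:2207.00194 — 2 statements merged into one kernel-verified Lean document; each statement's English description precedes it below -/
import Mathlib

section
/- Let E ∈ (-2,2) with E = 2cos(πk), k ∈ (0,1), let b ∈ ℕ and K > 0, and let V : ℕ → ℝ satisfy |V(n)| ≤ K/(n-b) and |V(n)/sin(πk)| < 1/2 for all n > b. Let θ(n) be the Prüfer angle of a solution of u(n+1) + u(n-1) + V(n)u(n) = E·u(n). Then there exists a constant C (depending only on E and K) such that for all n > n₀ > b, |∑_{l=n₀}^{n} sin(2πθ(l))/(l-b)| ≤ C/(n₀-b). -/
/-!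
Under the smallness assumption `|V(n)/sin(πk)| < 1/2` the Prüfer recursion
`cot(πθ(n+1) - πk) = cot(πθ(n)) - V(n)/sin(πk)` moves the angle by `k` up to an error
`|θ(n+1) - θ(n) - k| ≤ |V(n)/sin(πk)| ≤ (K/sin(πk))/(n-b)`. Hence `a(l) = e^{2πiθ(l)}` is,
up to `O(1/(l-b))`, the geometric sequence with ratio `w = e^{2πik} ≠ 1`, and
`(1 - w) a(l) = (a(l) - a(l+1)) + (a(l+1) - w a(l))`. Against the weights `1/(l-b)`, the first
part is summed by parts and the second is bounded by `∑ (l-b)⁻² ≤ 2/(n₀-b)`.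
-/

noncomputable section

/-- `u` solves the eigen-equation `u(n+1) + u(n-1) + V(n)u(n) = E·u(n)` for all `n ≥ 1`. -/
def EigenEq (V : ℕ → ℝ) (E : ℝ) (u : ℕ → ℝ) : Prop :=
  ∀ n : ℕ, 1 ≤ n → u (n + 1) + u (n - 1) + V n * u n = E * u n

/-- `(R, θ)` are modified Prüfer variables (radius and angle) of the solution `u`,
with quasimomentum `k`: `u(n-1) = R(n)·sin(πθ(n) - πk)` and
`(u(n) - cos(πk)·u(n-1))/sin(πk) = R(n)·cos(πθ(n) - πk)`, with `R(n) > 0`. -/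
def PruferRel (k : ℝ) (u R θ : ℕ → ℝ) : Prop :=
  ∀ n : ℕ, 1 ≤ n → 0 < R n ∧
    u (n - 1) = R n * Real.sin (Real.pi * θ n - Real.pi * k) ∧
    (u n - Real.cos (Real.pi * k) * u (n - 1)) / Real.sin (Real.pi * k)
      = R n * Real.cos (Real.pi * θ n - Real.pi * k)

/-- The Prüfer angle is chosen along the continuous branch:
`θ(n+1) - θ(n) - k ∈ (-1/2, 1/2)`. -/
def BranchCond (k : ℝ) (θ : ℕ → ℝ) : Prop :=
  ∀ n : ℕ, 1 ≤ n → |θ (n + 1) - θ n - k| < 1 / 2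

open Real Finset

lemma abs_le_abs_tan {x : ℝ} (hx : |x| < π / 2) : |x| ≤ |tan x| := by
  rcases le_or_gt 0 x with h | h
  · rw [abs_of_nonneg h] at hx ⊢
    exact (le_tan h hx).trans (le_abs_self _)
  · rw [abs_of_neg h] at hx ⊢
    rw [← abs_neg, ← tan_neg]
    exact (le_tan (by linarith) hx).trans (le_abs_self _)

lemma abs_le_abs_div_of_polar {ρ δ p q : ℝ} (hρ : 0 < ρ) (hδ : |δ| < π / 2)
    (hp : p = ρ * sin δ) (hq : q = ρ * cos δ) : |δ| ≤ |p / q| := by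
  calc |δ| ≤ |tan δ| := abs_le_abs_tan hδ
    _ = |p / q| := by
      rw [tan_eq_sin_div_cos, hp, hq, mul_div_mul_left _ _ hρ.ne']

lemma Complex.norm_exp_ofReal_mul_I_sub_le (x y : ℝ) :
    ‖Complex.exp (x * Complex.I) - Complex.exp (y * Complex.I)‖ ≤ |x - y| := by
  have h : Complex.exp (x * Complex.I) - Complex.exp (y * Complex.I)
      = Complex.exp (y * Complex.I) * (Complex.exp (Complex.I * ↑(x - y)) - 1) := by
    rw [mul_sub, ← Complex.exp_add]; push_cast; ring_nf
  rw [h, norm_mul, Complex.norm_exp_ofReal_mul_I, one_mul, ← Real.norm_eq_abs]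
  exact norm_exp_I_mul_ofReal_sub_one_le

lemma Complex.exp_two_pi_mul_I_ne_one {k : ℝ} (hk : k ∈ Set.Ioo (0 : ℝ) 1) :
    Complex.exp ((2 * π * k : ℝ) * Complex.I) ≠ 1 := by
  rw [Ne, Complex.exp_eq_one_iff]
  rintro ⟨m, hm⟩
  have hkm : k = m := by
    have h : (((2 * π) * k : ℝ) : ℂ) = (((2 * π) * m : ℝ) : ℂ) := by
      apply mul_right_cancel₀ Complex.I_ne_zero
      rw [hm]; push_cast; ring
    exact mul_left_cancel₀ (by positivity) (Complex.ofReal_injective h)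
  obtain ⟨h0, h1⟩ := hk
  rw [hkm] at h0 h1
  have : (0 : ℤ) < m := by exact_mod_cast h0
  have : m < (1 : ℤ) := by exact_mod_cast h1
  omega

namespace PruferRel

variable {k : ℝ} {V u R θ : ℕ → ℝ}

lemma eq_mul_sin (hP : PruferRel k u R θ) (hk : sin (π * k) ≠ 0) {n : ℕ} (hn : 1 ≤ n) :
    u n = R n * sin (π * θ n) := by
  obtain ⟨-, hprev, hcur⟩ := hP n hn
  rw [div_eq_iff hk, hprev] at hcur
  have := sin_add (π * θ n - π * k) (π * k)
  rw [sub_add_cancel] at this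
  rw [this]
  linear_combination hcur

/-- The Prüfer recursion `cot(πθ(n+1) - πk) = cot(πθ(n)) - V(n)/sin(πk)`, in polar form. -/
lemma transfer (hP : PruferRel k u R θ) (hE : EigenEq V (2 * cos (π * k)) u)
    (hk : sin (π * k) ≠ 0) {n : ℕ} (hn : 1 ≤ n) :
    R (n + 1) * sin (π * θ (n + 1) - π * k) = R n * sin (π * θ n) ∧
    R (n + 1) * cos (π * θ (n + 1) - π * k)
      = R n * (cos (π * θ n) - V n / sin (π * k) * sin (π * θ n)) := by
  obtain ⟨-, hprev, -⟩ := hP n hn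
  obtain ⟨-, hcur, hnext⟩ := hP (n + 1) (by omega)
  rw [Nat.add_sub_cancel] at hcur hnext
  have hun := hP.eq_mul_sin hk hn
  refine ⟨hcur ▸ hun, ?_⟩
  rw [sin_sub] at hprev
  have hstep : u (n + 1) - cos (π * k) * u n
      = R n * (cos (π * θ n) * sin (π * k) - V n * sin (π * θ n)) := by
    linear_combination hE n hn - hprev + (cos (π * k) - V n) * hun
  rw [← hnext, hstep]
  field_simp

lemma increment_polar (hP : PruferRel k u R θ) (hE : EigenEq V (2 * cos (π * k)) u)
    (hk : sin (π * k) ≠ 0) {n : ℕ} (hn : 1 ≤ n) :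
    R (n + 1) * sin (π * (θ (n + 1) - θ n - k))
      = R n * (V n / sin (π * k) * sin (π * θ n) ^ 2) ∧
    R (n + 1) * cos (π * (θ (n + 1) - θ n - k))
      = R n * (1 - V n / sin (π * k) * sin (π * θ n) * cos (π * θ n)) := by
  obtain ⟨hsin, hcos⟩ := hP.transfer hE hk hn
  have hδ : π * (θ (n + 1) - θ n - k) = (π * θ (n + 1) - π * k) - π * θ n := by ring
  have hpyth := sin_sq_add_cos_sq (π * θ n)
  rw [hδ, sin_sub (π * θ (n + 1) - π * k), cos_sub (π * θ (n + 1) - π * k)]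
  constructor
  · linear_combination cos (π * θ n) * hsin - sin (π * θ n) * hcos
  · linear_combination sin (π * θ n) * hsin + cos (π * θ n) * hcos + R n * hpyth

lemma abs_increment_le (hP : PruferRel k u R θ) (hE : EigenEq V (2 * cos (π * k)) u)
    (hB : BranchCond k θ) (hk : sin (π * k) ≠ 0) {n : ℕ} (hn : 1 ≤ n)
    (hV : |V n / sin (π * k)| < 1 / 2) :
    |θ (n + 1) - θ n - k| ≤ |V n / sin (π * k)| := by
  obtain ⟨hsin, hcos⟩ := hP.increment_polar hE hk hn
  set v := V n / sin (π * k)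
  set α := π * θ n
  have hRn := (hP n hn).1
  have hsc : |sin α * cos α| ≤ 1 / 2 := by
    rw [show sin α * cos α = sin (2 * α) / 2 by rw [sin_two_mul]; ring, abs_div, abs_two]
    linarith [abs_sin_le_one (2 * α)]
  have hden : 3 / 4 ≤ 1 - v * sin α * cos α := by
    have : |v * (sin α * cos α)| ≤ 1 / 2 * (1 / 2) := by
      rw [abs_mul]; exact mul_le_mul hV.le hsc (abs_nonneg _) (by norm_num)
    rw [mul_assoc]
    linarith [(abs_le.mp this).2]
  have hnum : |v * sin α ^ 2| ≤ |v| := by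
    rw [abs_mul, abs_of_nonneg (sq_nonneg (sin α))]
    exact mul_le_of_le_one_right (abs_nonneg v) (sin_sq_le_one α)
  have hbranch : |π * (θ (n + 1) - θ n - k)| < π / 2 := by
    rw [abs_mul, abs_of_pos pi_pos]; nlinarith [hB n hn, pi_pos]
  have hangle := abs_le_abs_div_of_polar (hP (n + 1) (by omega)).1 hbranch hsin.symm hcos.symm
  rw [mul_div_mul_left _ _ hRn.ne', abs_div, abs_of_pos (by linarith : 0 < 1 - v * sin α * cos α),
    abs_mul π, abs_of_pos pi_pos] at hangle
  have : |v * sin α ^ 2| / (1 - v * sin α * cos α) ≤ |v| / (3 / 4) :=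
    div_le_div₀ (abs_nonneg v) hnum (by norm_num) hden
  nlinarith [abs_nonneg v, abs_nonneg (θ (n + 1) - θ n - k), pi_gt_three]

end PruferRel

lemma norm_sum_Icc_smul_sub_le {E : Type*} [SeminormedAddCommGroup E] [NormedSpace ℝ E]
    {a : ℕ → E} (ha : ∀ l, ‖a l‖ ≤ 1) {c : ℕ → ℝ} {m : ℕ}
    (hc : AntitoneOn c (Set.Ici m)) (hc0 : ∀ l, m ≤ l → 0 ≤ c l) {n : ℕ} (hmn : m ≤ n) :
    ‖∑ l ∈ Icc m n, c l • (a l - a (l + 1))‖ ≤ 2 * c m := by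
  have hdiff : ∀ l, ‖a m - a l‖ ≤ 2 := fun l =>
    (norm_sub_le _ _).trans (by linarith [ha m, ha l])
  -- Abel summation: the difference is `∑_{m ≤ l < n} (c l - c (l + 1)) • (a m - a (l + 1))`,
  -- of total weight `c m - c n`.
  have key : ∀ n, m ≤ n →
      ‖∑ l ∈ Icc m n, c l • (a l - a (l + 1)) - c n • (a m - a (n + 1))‖ ≤ 2 * (c m - c n) := by
    intro n hmn
    induction n, hmn using Nat.le_induction with
    | base => simp
    | succ n hmn ih =>
      have hcn : c (n + 1) ≤ c n := hc (Set.mem_Ici.2 hmn) (Set.mem_Ici.2 (by omega)) (by omega)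
      rw [sum_Icc_succ_top (by omega)]
      calc _ = ‖(∑ l ∈ Icc m n, c l • (a l - a (l + 1)) - c n • (a m - a (n + 1)))
              + (c n - c (n + 1)) • (a m - a (n + 1))‖ := by
            congr 1; simp only [sub_smul, smul_sub]; abel
        _ ≤ 2 * (c m - c n) + (c n - c (n + 1)) * 2 := by
            refine (norm_add_le _ _).trans (add_le_add ih ?_)
            rw [norm_smul, Real.norm_of_nonneg (by linarith)]
            exact mul_le_mul_of_nonneg_left (hdiff _) (by linarith)
        _ = 2 * (c m - c (n + 1)) := by ring
  calc _ ≤ ‖∑ l ∈ Icc m n, c l • (a l - a (l + 1)) - c n • (a m - a (n + 1))‖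
          + ‖c n • (a m - a (n + 1))‖ := norm_le_norm_sub_add _ _
    _ ≤ 2 * (c m - c n) + c n * 2 := by
        refine add_le_add (key n hmn) ?_
        rw [norm_smul, Real.norm_of_nonneg (hc0 n hmn)]
        exact mul_le_mul_of_nonneg_left (hdiff _) (hc0 n hmn)
    _ = 2 * c m := by ring

lemma norm_sum_Icc_smul_le_of_near_rotation {a : ℕ → ℂ} {w : ℂ} (hw : w ≠ 1)
    (ha : ∀ l, ‖a l‖ ≤ 1) {c : ℕ → ℝ} {m : ℕ} (hc : AntitoneOn c (Set.Ici m))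
    (hc0 : ∀ l, m ≤ l → 0 ≤ c l) {M : ℝ}
    (hrot : ∀ l, m ≤ l → ‖a (l + 1) - w * a l‖ ≤ M * c l) {n : ℕ} (hmn : m ≤ n) :
    ‖∑ l ∈ Icc m n, c l • a l‖ ≤ ‖(1 - w)⁻¹‖ * (2 * c m + M * ∑ l ∈ Icc m n, c l ^ 2) := by
  have hsplit : (1 - w) * ∑ l ∈ Icc m n, c l • a l
      = ∑ l ∈ Icc m n, c l • (a l - a (l + 1)) + ∑ l ∈ Icc m n, c l • (a (l + 1) - w * a l) := by
    rw [mul_sum, ← sum_add_distrib]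
    refine sum_congr rfl fun l _ => ?_
    simp only [Complex.real_smul]
    ring
  have herr : ‖∑ l ∈ Icc m n, c l • (a (l + 1) - w * a l)‖ ≤ M * ∑ l ∈ Icc m n, c l ^ 2 := by
    rw [mul_sum]
    refine (norm_sum_le _ _).trans (sum_le_sum fun l hl => ?_)
    have hl := (mem_Icc.1 hl).1
    rw [norm_smul, Real.norm_of_nonneg (hc0 l hl)]
    calc c l * ‖a (l + 1) - w * a l‖ ≤ c l * (M * c l) :=
          mul_le_mul_of_nonneg_left (hrot l hl) (hc0 l hl)
      _ = M * c l ^ 2 := by ring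
  calc ‖∑ l ∈ Icc m n, c l • a l‖ = ‖(1 - w)⁻¹ * ((1 - w) * ∑ l ∈ Icc m n, c l • a l)‖ := by
        rw [inv_mul_cancel_left₀ (sub_ne_zero.2 hw.symm)]
    _ ≤ _ := by
        rw [norm_mul, hsplit]
        exact mul_le_mul_of_nonneg_left ((norm_add_le _ _).trans
          (add_le_add (norm_sum_Icc_smul_sub_le ha hc hc0 hmn) herr)) (norm_nonneg _)

lemma sum_Icc_inv_sub_sq_le {b m : ℕ} (hbm : b < m) (n : ℕ) :
    ∑ l ∈ Icc m n, ((l : ℝ) - b)⁻¹ ^ 2 ≤ 2 * ((m : ℝ) - b)⁻¹ := by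
  set c : ℕ → ℝ := fun l => ((l : ℝ) - b)⁻¹
  have hge : ∀ l, m ≤ l → (1 : ℝ) ≤ (l : ℝ) - b := fun l hl => by
    have : ((b + 1 : ℕ) : ℝ) ≤ l := by exact_mod_cast hl.trans' hbm
    push_cast at this; linarith
  -- `x⁻² ≤ 2 (x⁻¹ - (x + 1)⁻¹)` as soon as `x ≥ 1`
  have hterm : ∀ l ∈ Icc m n, c l ^ 2 ≤ 2 * (c l - c (l + 1)) := by
    intro l hl
    have hx := hge l (mem_Icc.1 hl).1
    simp only [c]; push_cast
    rw [show (l : ℝ) + 1 - b = ((l : ℝ) - b) + 1 by ring]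
    generalize (l : ℝ) - b = x at hx ⊢
    rw [inv_sub_inv (by positivity) (by positivity)]
    field_simp
    nlinarith
  rcases le_or_gt m n with hmn | hnm
  · calc ∑ l ∈ Icc m n, c l ^ 2 ≤ ∑ l ∈ Icc m n, 2 * (c l - c (l + 1)) := sum_le_sum hterm
      _ = -2 * ∑ l ∈ Icc m n, (c (l + 1) - c l) := by
          rw [mul_sum]; exact sum_congr rfl fun _ _ => by ring
      _ = 2 * (c m - c (n + 1)) := by rw [sum_Icc_sub hmn]; ring
      _ ≤ 2 * c m := by linarith [inv_nonneg.2 (zero_le_one.trans (hge (n + 1) (by omega)))]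
  · rw [Icc_eq_empty_of_lt hnm, sum_empty]
    exact mul_nonneg zero_le_two (inv_nonneg.2 (zero_le_one.trans (hge m le_rfl)))

theorem abs_sum_Icc_sin_div_le {k A : ℝ} (hk : k ∈ Set.Ioo (0 : ℝ) 1) {b : ℕ} {θ : ℕ → ℝ}
    (hθ : ∀ l, b < l → |θ (l + 1) - θ l - k| ≤ A * ((l : ℝ) - b)⁻¹)
    {n₀ n : ℕ} (hn₀ : b < n₀) (hn : n₀ ≤ n) :
    |∑ l ∈ Icc n₀ n, sin (2 * π * θ l) / ((l : ℝ) - b)|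
      ≤ ‖(1 - Complex.exp ((2 * π * k : ℝ) * Complex.I))⁻¹‖ * (2 + 4 * π * A)
        / ((n₀ : ℝ) - b) := by
  set c : ℕ → ℝ := fun l => ((l : ℝ) - b)⁻¹
  set a : ℕ → ℂ := fun l => Complex.exp ((2 * π * θ l : ℝ) * Complex.I)
  set w := Complex.exp ((2 * π * k : ℝ) * Complex.I)
  have hge : ∀ l, n₀ ≤ l → (1 : ℝ) ≤ (l : ℝ) - b := fun l hl => by
    have : ((b + 1 : ℕ) : ℝ) ≤ l := by exact_mod_cast hl.trans' hn₀
    push_cast at this; linarith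
  have hc0 : ∀ l, n₀ ≤ l → 0 ≤ c l := fun l hl => inv_nonneg.2 (zero_le_one.trans (hge l hl))
  have hc : AntitoneOn c (Set.Ici n₀) := fun l hl l' _ hll' =>
    inv_anti₀ (zero_lt_one.trans_le (hge l hl)) (by gcongr)
  have hA : 0 ≤ A := by
    have h := (abs_nonneg _).trans (hθ (b + 1) (by omega))
    push_cast at h
    simpa using h
  have hrot : ∀ l, n₀ ≤ l → ‖a (l + 1) - w * a l‖ ≤ 2 * π * A * c l := fun l hl => by
    have hwa : w * a l = Complex.exp ((2 * π * (θ l + k) : ℝ) * Complex.I) := by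
      simp only [w, a, ← Complex.exp_add]; push_cast; ring_nf
    calc ‖a (l + 1) - w * a l‖ ≤ |2 * π * θ (l + 1) - 2 * π * (θ l + k)| := by
          rw [hwa]; exact Complex.norm_exp_ofReal_mul_I_sub_le _ _
      _ = 2 * π * |θ (l + 1) - θ l - k| := by
          rw [← abs_of_pos two_pi_pos, ← abs_mul, abs_of_pos two_pi_pos]; ring_nf
      _ ≤ 2 * π * A * c l := by
          rw [mul_assoc _ A]; gcongr; exact hθ l (by omega)
  have hsum : ∑ l ∈ Icc n₀ n, sin (2 * π * θ l) / ((l : ℝ) - b)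
      = (∑ l ∈ Icc n₀ n, c l • a l).im := by
    rw [Complex.im_sum]
    refine sum_congr rfl fun l _ => ?_
    rw [Complex.smul_im, Complex.exp_ofReal_mul_I_im, smul_eq_mul, div_eq_inv_mul]
  calc |∑ l ∈ Icc n₀ n, sin (2 * π * θ l) / ((l : ℝ) - b)|
      ≤ ‖∑ l ∈ Icc n₀ n, c l • a l‖ := hsum ▸ Complex.abs_im_le_norm _
    _ ≤ ‖(1 - w)⁻¹‖ * (2 * c n₀ + 2 * π * A * ∑ l ∈ Icc n₀ n, c l ^ 2) :=
        norm_sum_Icc_smul_le_of_near_rotation (Complex.exp_two_pi_mul_I_ne_one hk)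
          (fun l => (Complex.norm_exp_ofReal_mul_I _).le) hc hc0 hrot hn
    _ ≤ ‖(1 - w)⁻¹‖ * (2 * c n₀ + 2 * π * A * (2 * c n₀)) := by
        gcongr; exact sum_Icc_inv_sub_sq_le hn₀ n
    _ = ‖(1 - w)⁻¹‖ * (2 + 4 * π * A) / ((n₀ : ℝ) - b) := by
        simp only [c]; ring

theorem oscillatory_sum_sin_general (E k : ℝ)
    (hk : k ∈ Set.Ioo (0 : ℝ) 1) (hEk : E = 2 * Real.cos (Real.pi * k))
    (b : ℕ) (K : ℝ) (hK : 0 < K) :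
    ∃ C : ℝ, 0 < C ∧ ∀ V u R θ : ℕ → ℝ,
      (∀ n : ℕ, b < n → |V n| ≤ K / ((n : ℝ) - (b : ℝ))) →
      (∀ n : ℕ, b < n → |V n / Real.sin (Real.pi * k)| < 1 / 2) →
      u ≠ 0 → EigenEq V E u → PruferRel k u R θ → BranchCond k θ →
      ∀ n₀ n : ℕ, b < n₀ → n₀ < n →
        |∑ l ∈ Finset.Icc n₀ n, Real.sin (2 * Real.pi * θ l) / ((l : ℝ) - (b : ℝ))|
          ≤ C / ((n₀ : ℝ) - (b : ℝ)) := by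
  subst hEk
  have hs : 0 < sin (π * k) :=
    sin_pos_of_pos_of_lt_pi (mul_pos pi_pos hk.1) (by nlinarith [pi_pos, hk.2])
  have hw : (1 - Complex.exp ((2 * π * k : ℝ) * Complex.I))⁻¹ ≠ 0 :=
    inv_ne_zero (sub_ne_zero.2 (Complex.exp_two_pi_mul_I_ne_one hk).symm)
  refine ⟨_, mul_pos (norm_pos_iff.2 hw) (by positivity : 0 < 2 + 4 * π * (K / sin (π * k))),
    fun V u R θ hV hVs _ hE hP hB n₀ n hn₀ hn => abs_sum_Icc_sin_div_le hk (fun l hl => ?_) hn₀ hn.le⟩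
  calc |θ (l + 1) - θ l - k| ≤ |V l / sin (π * k)| :=
        hP.abs_increment_le hE hB hs.ne' (by omega) (hVs l hl)
    _ = |V l| / sin (π * k) := by rw [abs_div, abs_of_pos hs]
    _ ≤ K / ((l : ℝ) - b) / sin (π * k) := by gcongr; exact hV l hl
    _ = K / sin (π * k) * ((l : ℝ) - b)⁻¹ := by ring

/-- Oscillatory sum estimate (Lemma 4.2, first bound): for a Prüfer angle `θ` of a
solution at energy `E = 2cos(πk)` with `|V(n)| ≤ K/(n-b)`, the weighted sums of
`sin(2πθ(l))/(l-b)` are bounded by `C(E,K)/(n₀-b)`. -/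
theorem oscillatory_sum_sin (E k : ℝ) (hE : E ∈ Set.Ioo (-2 : ℝ) 2)
    (hk : k ∈ Set.Ioo (0 : ℝ) 1) (hEk : E = 2 * Real.cos (Real.pi * k))
    (b : ℕ) (K : ℝ) (hK : 0 < K) :
    ∃ C : ℝ, 0 < C ∧ ∀ V u R θ : ℕ → ℝ,
      (∀ n : ℕ, b < n → |V n| ≤ K / ((n : ℝ) - (b : ℝ))) →
      (∀ n : ℕ, b < n → |V n / Real.sin (Real.pi * k)| < 1 / 2) →
      u ≠ 0 → EigenEq V E u → PruferRel k u R θ → BranchCond k θ →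
      ∀ n₀ n : ℕ, b < n₀ → n₀ < n →
        |∑ l ∈ Finset.Icc n₀ n, Real.sin (2 * Real.pi * θ l) / ((l : ℝ) - (b : ℝ))|
          ≤ C / ((n₀ : ℝ) - (b : ℝ)) :=
  oscillatory_sum_sin_general E k hk hEk b K hK

end
end

section
/- Let k ∈ (0,1), b ∈ ℕ, K > 0, and let θ : ℕ → ℝ satisfy |θ(l+1) - θ(l) - k| ≤ (K/sin(πk))·1/(l-b) for all l > b. Then there exists a constant C (depending only on k and K) such that for all n > n₀ > b, |∑_{l=n₀}^{n} e^{2πi·θ(l)}/(l-b)| ≤ C/(n₀-b). -/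
/-!
Write `a l = e(θ l)` and `z = e(k)`, where `e(t) = exp (2πit)`. The hypothesis makes `a` almost
geometric: `a (l + 1) = z a l + r l` with `|r l| ≤ 2πK' / (l - b)`, `K' = K / sin (πk)`. Hence
`(z - 1) a l = (a (l + 1) - a l) - r l`. Summation by parts against the decreasing weights
`1 / (l - b)` bounds the weighted sum of the differences `a (l + 1) - a l` by `2 / (n₀ - b)`, and
the weighted sum of the errors is at most `2πK' ∑ 1 / (l - b)² ≤ 4πK' / (n₀ - b)`. It remains to
divide by `|z - 1| = 2 sin (πk)`, which is positive because `k ∉ ℤ`.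
-/

open Complex Finset
open scoped Real

section SummationByParts

variable {E : Type*} [SeminormedAddCommGroup E] [NormedSpace ℝ E]
  {a : ℕ → E} {w : ℕ → ℝ} {A : ℝ} {m n : ℕ}

/-- Abel summation, in a form that goes through by induction on `n`. -/
theorem norm_sum_Ico_smul_sub_add_smul_sub_smul_le (ha : ∀ l, ‖a l‖ ≤ A) (hmn : m ≤ n)
    (hw : AntitoneOn w (Set.Icc m n)) :
    ‖∑ l ∈ Ico m n, w l • (a (l + 1) - a l) + w m • a m - w n • a n‖ ≤ A * (w m - w n) := by
  induction n, hmn using Nat.le_induction with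
  | base => simp
  | succ n hmn ih =>
    have hstep : w (n + 1) ≤ w n := hw ⟨hmn, n.le_succ⟩ ⟨by omega, le_rfl⟩ n.le_succ
    have hprev := ih (hw.mono (Set.Icc_subset_Icc_right n.le_succ))
    have hlast : ‖(w n - w (n + 1)) • a (n + 1)‖ ≤ A * (w n - w (n + 1)) := by
      rw [norm_smul, Real.norm_of_nonneg (by linarith), mul_comm]
      exact mul_le_mul_of_nonneg_right (ha _) (by linarith)
    calc _ = ‖(∑ l ∈ Ico m n, w l • (a (l + 1) - a l) + w m • a m - w n • a n)
            + (w n - w (n + 1)) • a (n + 1)‖ := by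
          rw [sum_Ico_succ_top hmn]
          generalize ∑ l ∈ Ico m n, w l • (a (l + 1) - a l) = S
          congr 1; module
      _ ≤ A * (w m - w n) + A * (w n - w (n + 1)) := norm_add_le_of_le hprev hlast
      _ = A * (w m - w (n + 1)) := by ring

theorem norm_sum_Ico_smul_sub_le (ha : ∀ l, ‖a l‖ ≤ A) (hmn : m ≤ n)
    (hw : AntitoneOn w (Set.Icc m n)) (hwn : 0 ≤ w n) :
    ‖∑ l ∈ Ico m n, w l • (a (l + 1) - a l)‖ ≤ 2 * A * w m := by
  have hwm : w n ≤ w m := hw ⟨le_rfl, hmn⟩ ⟨hmn, le_rfl⟩ hmn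
  have hsmul : ∀ l, 0 ≤ w l → ‖w l • a l‖ ≤ w l * A := fun l hl => by
    rw [norm_smul, Real.norm_of_nonneg hl]; exact mul_le_mul_of_nonneg_left (ha l) hl
  calc _ = ‖(∑ l ∈ Ico m n, w l • (a (l + 1) - a l) + w m • a m - w n • a n)
          - w m • a m + w n • a n‖ := by
        generalize ∑ l ∈ Ico m n, w l • (a (l + 1) - a l) = S
        congr 1; abel
    _ ≤ A * (w m - w n) + w m * A + w n * A :=
      norm_add_le_of_le (norm_sub_le_of_le
        (norm_sum_Ico_smul_sub_add_smul_sub_smul_le ha hmn hw) (hsmul m (by linarith)))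
        (hsmul n hwn)
    _ = 2 * A * w m := by ring

end SummationByParts

theorem norm_sub_one_mul_norm_sum_Ico_smul_le {a : ℕ → ℂ} {w ε : ℕ → ℝ} {A : ℝ} {z : ℂ}
    {m n : ℕ} (ha : ∀ l, ‖a l‖ ≤ A) (hmn : m ≤ n) (hw : AntitoneOn w (Set.Icc m n))
    (hwn : 0 ≤ w n) (hε : ∀ l ∈ Ico m n, ‖a (l + 1) - z * a l‖ ≤ ε l) :
    ‖z - 1‖ * ‖∑ l ∈ Ico m n, w l • a l‖ ≤ 2 * A * w m + ∑ l ∈ Ico m n, w l * ε l := by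
  have hsplit : (z - 1) * ∑ l ∈ Ico m n, w l • a l
      = ∑ l ∈ Ico m n, w l • (a (l + 1) - a l) - ∑ l ∈ Ico m n, w l • (a (l + 1) - z * a l) := by
    simp only [mul_sum, ← sum_sub_distrib, real_smul]
    exact sum_congr rfl fun l _ => by ring
  have herr : ∀ l ∈ Ico m n, ‖w l • (a (l + 1) - z * a l)‖ ≤ w l * ε l := fun l hl => by
    have hl' := mem_Ico.mp hl
    have hwl : 0 ≤ w l := hwn.trans (hw ⟨hl'.1, hl'.2.le⟩ ⟨hmn, le_rfl⟩ hl'.2.le)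
    rw [norm_smul, Real.norm_of_nonneg hwl]
    exact mul_le_mul_of_nonneg_left (hε l hl) hwl
  rw [← norm_mul, hsplit]
  exact norm_sub_le_of_le (norm_sum_Ico_smul_sub_le ha hmn hw hwn) (norm_sum_le_of_le _ herr)

theorem inv_sq_le_two_mul_inv_sub_inv {x : ℝ} (hx : 1 ≤ x) :
    x⁻¹ ^ 2 ≤ 2 * (x⁻¹ - (x + 1)⁻¹) := by
  rw [inv_sub_inv (by positivity) (by positivity)]
  field_simp
  nlinarith

theorem sum_Ico_inv_sub_sq_le (c : ℝ) {m n : ℕ} (hm : c + 1 ≤ m) (hmn : m ≤ n) :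
    ∑ l ∈ Ico m n, ((l : ℝ) - c)⁻¹ ^ 2 ≤ 2 * (((m : ℝ) - c)⁻¹ - ((n : ℝ) - c)⁻¹) := by
  induction n, hmn using Nat.le_induction with
  | base => simp
  | succ n hmn ih =>
    have hn : 1 ≤ (n : ℝ) - c := by
      have : (m : ℝ) ≤ n := by exact_mod_cast hmn
      linarith
    have := inv_sq_le_two_mul_inv_sub_inv hn
    rw [sum_Ico_succ_top hmn, Nat.cast_succ, add_sub_right_comm]
    linarith

theorem antitoneOn_inv_natCast_sub (c : ℝ) :
    AntitoneOn (fun l : ℕ => ((l : ℝ) - c)⁻¹) {l | c < l} := fun _ hx _ _ hxy =>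
  inv_anti₀ (sub_pos.mpr hx) (sub_le_sub_right (Nat.cast_le.mpr hxy) c)

theorem norm_exp_two_pi_I_mul (t : ℝ) : ‖exp (2 * π * I * t)‖ = 1 := by
  rw [norm_exp]; simp

theorem norm_exp_two_pi_I_mul_sub_one (t : ℝ) :
    ‖exp (2 * π * I * t) - 1‖ = 2 * |Real.sin (π * t)| := by
  have h := norm_exp_I_mul_ofReal_sub_one (2 * π * t)
  rw [show 2 * π * t / 2 = π * t by ring, norm_mul, Real.norm_two, Real.norm_eq_abs] at h
  rw [← h]; push_cast; ring_nf

theorem norm_exp_two_pi_I_mul_sub_le (s t : ℝ) :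
    ‖exp (2 * π * I * s) - exp (2 * π * I * t)‖ ≤ 2 * π * |s - t| := by
  have h : exp (2 * π * I * s) - exp (2 * π * I * t)
      = exp (2 * π * I * t) * (exp (I * ↑(2 * π * (s - t))) - 1) := by
    rw [mul_sub, ← exp_add]; push_cast; ring_nf
  rw [h, norm_mul, norm_exp_two_pi_I_mul, one_mul]
  calc _ ≤ ‖2 * π * (s - t)‖ := Real.norm_exp_I_mul_ofReal_sub_one_le
    _ = 2 * π * |s - t| := by rw [Real.norm_eq_abs, abs_mul, abs_of_pos Real.two_pi_pos]

theorem norm_exp_two_pi_I_mul_sub_one_mul_norm_sum_Ico_le {θ : ℕ → ℝ} {k c B : ℝ} {m n : ℕ}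
    (hB : 0 ≤ B) (hm : c + 1 ≤ m) (hmn : m ≤ n)
    (hθ : ∀ l ∈ Ico m n, |θ (l + 1) - θ l - k| ≤ B * ((l : ℝ) - c)⁻¹) :
    ‖exp (2 * π * I * k) - 1‖ * ‖∑ l ∈ Ico m n, ((l : ℝ) - c)⁻¹ • exp (2 * π * I * θ l)‖
      ≤ (2 + 4 * π * B) * ((m : ℝ) - c)⁻¹ := by
  have hc : ∀ l, m ≤ l → c < l := fun l hl => by
    linarith [(Nat.cast_le (α := ℝ)).mpr hl]
  have hw : AntitoneOn (fun l : ℕ => ((l : ℝ) - c)⁻¹) (Set.Icc m n) :=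
    (antitoneOn_inv_natCast_sub c).mono fun l hl => hc l hl.1
  have hε : ∀ l ∈ Ico m n, ‖exp (2 * π * I * θ (l + 1)) - exp (2 * π * I * k) *
      exp (2 * π * I * θ l)‖ ≤ 2 * π * (B * ((l : ℝ) - c)⁻¹) := fun l hl => by
    calc _ = ‖exp (2 * π * I * θ (l + 1)) - exp (2 * π * I * ↑(θ l + k))‖ := by
          rw [← exp_add]; push_cast; ring_nf
      _ ≤ 2 * π * |θ (l + 1) - θ l - k| := by
          rw [sub_sub]; exact norm_exp_two_pi_I_mul_sub_le _ _
      _ ≤ _ := by gcongr; exact hθ l hl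
  have hn : 0 ≤ ((n : ℝ) - c)⁻¹ := inv_nonneg.mpr (sub_pos.mpr (hc n hmn)).le
  have hsum := norm_sub_one_mul_norm_sum_Ico_smul_le (fun l => (norm_exp_two_pi_I_mul (θ l)).le)
    hmn hw hn hε
  have herr : ∑ l ∈ Ico m n, ((l : ℝ) - c)⁻¹ * (2 * π * (B * ((l : ℝ) - c)⁻¹))
      = 2 * π * B * ∑ l ∈ Ico m n, ((l : ℝ) - c)⁻¹ ^ 2 := by
    rw [mul_sum]; exact sum_congr rfl fun l _ => by ring
  have hπB : 0 ≤ 2 * π * B := by positivity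
  have hsq := mul_le_mul_of_nonneg_left (sum_Ico_inv_sub_sq_le c hm hmn) hπB
  linarith [mul_nonneg hπB hn]

/-- Abstract oscillatory sum estimate: if `θ(l)` advances by approximately `k ∈ (0,1)`
per step, with error at most `(K/sin(πk))·1/(l-b)`, then the weighted sums
`∑_{l=n₀}^{n} e^{2πiθ(l)}/(l-b)` are bounded by `C(k,K)/(n₀-b)`. -/
theorem abstract_oscillatory_sum (k : ℝ) (hk : k ∈ Set.Ioo (0 : ℝ) 1)
    (b : ℕ) (K : ℝ) (hK : 0 < K) :
    ∃ C : ℝ, 0 < C ∧ ∀ θ : ℕ → ℝ,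
      (∀ l : ℕ, b < l →
        |θ (l + 1) - θ l - k| ≤ K / Real.sin (Real.pi * k) * (1 / ((l : ℝ) - (b : ℝ)))) →
      ∀ n₀ n : ℕ, b < n₀ → n₀ < n →
        ‖(∑ l ∈ Finset.Icc n₀ n,
            Complex.exp (2 * (Real.pi : ℂ) * Complex.I * ((θ l : ℝ) : ℂ))
              / ((((l : ℝ) - (b : ℝ)) : ℝ) : ℂ))‖
          ≤ C / ((n₀ : ℝ) - (b : ℝ)) := by
  have hsin : 0 < Real.sin (π * k) :=
    Real.sin_pos_of_pos_of_lt_pi (by nlinarith [Real.pi_pos, hk.1])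
      (by nlinarith [Real.pi_pos, hk.2])
  refine ⟨(2 + 4 * π * (K / Real.sin (π * k))) / (2 * Real.sin (π * k)), by positivity,
    fun θ hθ n₀ n hbn₀ hn₀n => ?_⟩
  have hbound := norm_exp_two_pi_I_mul_sub_one_mul_norm_sum_Ico_le
    (θ := θ) (c := b) (m := n₀) (n := n + 1) (div_pos hK hsin).le (by exact_mod_cast hbn₀)
    (by omega) fun l hl => by
      simpa only [one_div] using hθ l (hbn₀.trans_le (mem_Ico.mp hl).1)
  rw [norm_exp_two_pi_I_mul_sub_one, abs_of_pos hsin, ← le_div_iff₀' (by positivity)] at hbound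
  have hsum : ∑ l ∈ Icc n₀ n, exp (2 * π * I * θ l) / ↑((l : ℝ) - b)
      = ∑ l ∈ Ico n₀ (n + 1), ((l : ℝ) - b)⁻¹ • exp (2 * π * I * θ l) := by
    rw [← Ico_add_one_right_eq_Icc]
    exact sum_congr rfl fun l _ => by rw [real_smul, div_eq_inv_mul, ofReal_inv]
  rw [hsum]
  exact hbound.trans_eq (by ring)
end
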